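/- arXiv:2210.16998 — 2 statements merged into one kernel-verified Lean document; each statement's English description precedes it below -/
import Mathlib

section
/- Let V be a vertex type, E : V → V → Prop an edge relation, and s, e ∈ V vertices such that every vertex v ≠ s has an in-neighbor (some x with E x v) and every vertex v ≠ e has an out-neighbor (some y with E v y). Then every prime path p of (V, E) that is not closed satisfies both of the following: its first vertex u is equal to s or lies on a cycle (Relation.TransGen E u u), and its last vertex w is equal to e or lies on a cycle (Relation.TransGen E w w). -/
/-- A (directed) path in the graph `(V, E)`: a nonempty list of vertices in which
consecutive vertices are related by the edge relation `E`. -/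
def IsPath {V : Type*} (E : V → V → Prop) (l : List V) : Prop :=
  l ≠ [] ∧ l.Chain' E

/-- A simple path: a path in which no vertex occurs more than once,
except that the first and last vertices may coincide. -/
def IsSimplePath {V : Type*} (E : V → V → Prop) (l : List V) : Prop :=
  IsPath E l ∧ l.dropLast.Nodup ∧ l.tail.Nodup

/-- A closed path: it has at least two vertices and its first and last vertices coincide. -/
def IsClosedPath {V : Type*} (l : List V) : Prop :=
  2 ≤ l.length ∧ l.head? = l.getLast?

/-- A prime path: a maximal simple path, i.e. a simple path that is not a proper
subpath (contiguous sublist) of any simple path. -/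
def IsPrimePath {V : Type*} (E : V → V → Prop) (l : List V) : Prop :=
  IsSimplePath E l ∧ ∀ q : List V, IsSimplePath E q → l <:+: q → l = q

/-!
Suppose the first vertex `u` of a non-closed prime path `p` is not `s`, and pick an in-neighbor
`x` of `u`. If `x` lies on `p`, then `p` leads from `u` to `x` and the edge `x → u` closes a
cycle through `u`. Otherwise `x :: p` is still a simple path (a non-closed simple path has no
repeated vertex), and it properly extends `p`, against primality. The statement about the last
vertex is the same statement for the reversed path in the reversed graph.
-/

open List Relation

section

variable {V : Type*} {E : V → V → Prop}

theorem List.IsChain.reflTransGen_of_head?_eq {l : List V} (h : l.IsChain E) {u : V}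
    (hu : l.head? = some u) : ∀ b ∈ l, ReflTransGen E u b :=
  h.induction _ _ (fun _ _ hxy hux => hux.tail hxy) fun hne => by
    rw [head?_eq_some_head hne, Option.some_inj] at hu
    exact hu ▸ .refl

theorem IsSimplePath.nodup_of_not_isClosedPath {l : List V} (h : IsSimplePath E l)
    (hnc : ¬ IsClosedPath l) : l.Nodup := by
  obtain ⟨⟨hne, -⟩, hdl, htl⟩ := h
  obtain ⟨a, t, rfl⟩ := exists_cons_of_ne_nil hne
  refine nodup_cons.2 ⟨fun ha => hnc ?_, htl⟩
  have ht : t ≠ [] := ne_nil_of_mem ha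
  rw [dropLast_cons_of_ne_nil ht, nodup_cons] at hdl
  have hlast : t.getLast ht = a := by
    rw [← dropLast_append_getLast ht, mem_append, mem_singleton] at ha
    exact (ha.resolve_left hdl.1).symm
  exact ⟨by simpa [Nat.one_le_iff_ne_zero] using ht, by
    rw [head?_cons, getLast?_cons, getLast?_eq_some_getLast ht, hlast, Option.getD_some]⟩

theorem IsSimplePath.cons {p : List V} (h : IsSimplePath E p) (hnd : p.Nodup) {x : V}
    (hx : x ∉ p) (hxp : ∀ u ∈ p.head?, E x u) : IsSimplePath E (x :: p) := by
  obtain ⟨⟨hne, hch⟩, hdl, -⟩ := h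
  refine ⟨⟨cons_ne_nil x p, isChain_cons.2 ⟨hxp, hch⟩⟩, ?_, hnd⟩
  rw [dropLast_cons_of_ne_nil hne]
  exact nodup_cons.2 ⟨fun hx' => hx (dropLast_subset p hx'), hdl⟩

theorem IsPrimePath.not_isSimplePath_cons {p : List V} (hp : IsPrimePath E p) (x : V) :
    ¬ IsSimplePath E (x :: p) := fun h =>
  cons_ne_self x p (hp.2 _ h (infix_cons (infix_refl p))).symm

theorem IsPrimePath.head_eq_or_transGen {s : V} (hs : ∀ v : V, v ≠ s → ∃ x : V, E x v)
    {p : List V} (hp : IsPrimePath E p) (hnc : ¬ IsClosedPath p) {u : V}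
    (hu : p.head? = some u) : u = s ∨ TransGen E u u := by
  refine or_iff_not_imp_left.2 fun hus => ?_
  obtain ⟨x, hx⟩ := hs u hus
  by_cases hxp : x ∈ p
  · exact .tail' (hp.1.1.2.reflTransGen_of_head?_eq hu x hxp) hx
  · refine absurd (hp.1.cons (hp.1.nodup_of_not_isClosedPath hnc) hxp ?_)
      (hp.not_isSimplePath_cons x)
    simpa [hu] using hx

theorem isSimplePath_reverse {l : List V} :
    IsSimplePath (flip E) l.reverse ↔ IsSimplePath E l := by
  simp only [IsSimplePath, IsPath, dropLast_reverse, tail_reverse, nodup_reverse]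
  exact and_congr (and_congr reverse_ne_nil_iff isChain_reverse) and_comm

theorem isClosedPath_reverse {l : List V} : IsClosedPath l.reverse ↔ IsClosedPath l := by
  simp only [IsClosedPath, length_reverse, head?_reverse, getLast?_reverse, eq_comm]

theorem IsPrimePath.reverse {p : List V} (hp : IsPrimePath E p) :
    IsPrimePath (flip E) p.reverse := by
  refine ⟨isSimplePath_reverse.2 hp.1, fun q hq hpq => ?_⟩
  have hq' : IsSimplePath E q.reverse := isSimplePath_reverse.1 (by rwa [reverse_reverse])
  rw [hp.2 q.reverse hq' (by rwa [← reverse_infix, reverse_reverse]), reverse_reverse]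

end

/-- Suppose every vertex other than `s` has an in-neighbor and every vertex
other than `e` has an out-neighbor. Then the first vertex of any non-closed
prime path equals `s` or lies on a cycle, and its last vertex equals `e` or
lies on a cycle. -/
theorem primePath_endpoints_classification {V : Type*} (E : V → V → Prop)
    (s e : V)
    (hs : ∀ v : V, v ≠ s → ∃ x : V, E x v)
    (he : ∀ v : V, v ≠ e → ∃ y : V, E v y)
    (p : List V) (hp : IsPrimePath E p) (hnc : ¬ IsClosedPath p) :
    (∀ u : V, p.head? = some u → u = s ∨ Relation.TransGen E u u) ∧
    (∀ w : V, p.getLast? = some w → w = e ∨ Relation.TransGen E w w) := by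
  refine ⟨fun u hu => hp.head_eq_or_transGen hs hnc hu, fun w hw => ?_⟩
  have hnc' : ¬ IsClosedPath p.reverse := by rwa [isClosedPath_reverse]
  have hw' : p.reverse.head? = some w := by rwa [head?_reverse]
  exact (hp.reverse.head_eq_or_transGen (E := flip E) he hnc' hw').imp_right transGen_swap.1
end

section
/- Let V be a finite vertex type, E : V → V → Prop an edge relation, and T a set of paths of (V, E) such that every prime path of (V, E) is a subpath of some member of T. Then every simple path of (V, E) is a subpath of some member of T; that is, prime path coverage subsumes coverage of all simple paths. -/
/-!
In a finite graph a simple path has at most `|V| + 1` vertices, so among the simple paths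
containing a given simple path `p` as a subpath there is a longest one; it is prime, and any
member of `T` covering it also covers `p`.
-/

namespace IsSimplePath

variable {V : Type*} {E : V → V → Prop} {p : List V}

theorem length_le_card_add_one [Fintype V] (hp : IsSimplePath E p) :
    p.length ≤ Fintype.card V + 1 := by
  have hdropLast : p.dropLast.length ≤ Fintype.card V := hp.2.1.length_le_card
  rw [List.length_dropLast] at hdropLast
  omega

theorem finite_setOf [Finite V] (E : V → V → Prop) : {p : List V | IsSimplePath E p}.Finite := by
  have := Fintype.ofFinite V
  exact (List.finite_length_le V (Fintype.card V + 1)).subset fun _ hp ↦ length_le_card_add_one hp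

theorem exists_isPrimePath_infix [Finite V] (hp : IsSimplePath E p) :
    ∃ q, IsPrimePath E q ∧ p <:+: q := by
  let S := {q : List V | IsSimplePath E q ∧ p <:+: q}
  have hS : S.Finite := (finite_setOf E).subset fun _ hq ↦ hq.1
  obtain ⟨q, ⟨hq, hpq⟩, hmax⟩ := hS.exists_maximalFor List.length S ⟨p, hp, List.infix_refl p⟩
  refine ⟨q, ⟨hq, fun r hr hqr ↦ hqr.eq_of_length_le ?_⟩, hpq⟩
  exact hmax ⟨hr, hpq.trans hqr⟩ hqr.length_le

end IsSimplePath

theorem primePath_coverage_subsumes_simplePath_coverage_general {V : Type*} [Fintype V]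
    (E : V → V → Prop) (T : Set (List V))
    (hcov : ∀ p : List V, IsPrimePath E p → ∃ t ∈ T, p <:+: t) :
    ∀ p : List V, IsSimplePath E p → ∃ t ∈ T, p <:+: t := by
  intro p hp
  obtain ⟨q, hq, hpq⟩ := hp.exists_isPrimePath_infix
  obtain ⟨t, ht, hqt⟩ := hcov q hq
  exact ⟨t, ht, hpq.trans hqt⟩

/-- If a set `T` of paths covers every prime path (as a subpath), then it covers
every simple path: prime path coverage subsumes coverage of all simple paths. -/
theorem primePath_coverage_subsumes_simplePath_coverage {V : Type*} [Fintype V]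
    (E : V → V → Prop) (T : Set (List V)) (hT : ∀ t ∈ T, IsPath E t)
    (hcov : ∀ p : List V, IsPrimePath E p → ∃ t ∈ T, p <:+: t) :
    ∀ p : List V, IsSimplePath E p → ∃ t ∈ T, p <:+: t :=
  primePath_coverage_subsumes_simplePath_coverage_general E T hcov
end
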